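/- Let v¹, …, vᵐ ∈ ℝ² be nonzero vectors such that ‖x‖_N = max_{1 ≤ k' ≤ m} |⟨x, v^{k'}⟩| defines a norm on ℝ², let 0 < q < 1, and let z¹, z², … be a sequence of points of ℝ² such that ‖z^i − z^j‖_N = (q^i − q^j)/(1−q) for all i < j. Suppose k ∈ {1, …, m} is such that ‖z^i − z^j‖_N = ⟨z^i − z^j, vᵏ⟩ for all i < j. Then for every u' ∈ ℝ² with ‖u'‖_N = 1 and ⟨u', vᵏ⟩ = 1, the point z⁰ = z¹ + u' satisfies ‖z⁰ − z^i‖_N = (1 − q^i)/(1−q) for all i ≥ 1; consequently the set {z⁰, z¹, z², …} is an N-isometric copy of the geometric progression G(q). -/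

import Mathlib

/-!
Write `s i = (1 - qⁱ)/(1 - q)`, so that `G(q) = {s 0, s 1, …}` and `‖zⁱ - zʲ‖_N = s j - s i`
for `1 ≤ i < j`. Being a maximum of the `|⟨·, vᵏ'⟩|`, the norm `‖·‖_N` is additive on two vectors
whose norm is attained as `+⟨·, vᵏ⟩` for the same `k`. This applies to `u'` and `z¹ - zⁱ`, so
`‖z¹ + u' - zⁱ‖_N = 1 + (s i - s 1) = s i`. Hence, with `z⁰ := z¹ + u'`,
`‖zⁱ - zʲ‖_N = |s i - s j|` for all `i, j`, and `s i ↦ zⁱ` is the required bijection.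
-/

/-- The standard Euclidean inner product on the plane. -/
def dot2 (x y : Fin 2 → ℝ) : ℝ := x 0 * y 0 + x 1 * y 1

/-- The geometric progression G(q) = {0, 1, 1+q, 1+q+q², …} ⊆ ℝ. -/
def geomProg (q : ℝ) : Set ℝ :=
  {x | x = 0 ∨ ∃ i : ℕ, 1 ≤ i ∧ x = (1 - q ^ i) / (1 - q)}

/-- `M'` is an `N`-isometric copy (in the plane) of the set of reals `M`:
there is a bijection from `M` onto `M'` carrying absolute differences to `N`-distances. -/
def IsometricCopyOfReals (N : (Fin 2 → ℝ) → ℝ) (M : Set ℝ) (M' : Set (Fin 2 → ℝ)) : Prop :=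
  ∃ f : ℝ → (Fin 2 → ℝ), Set.BijOn f M M' ∧ ∀ x ∈ M, ∀ y ∈ M, N (f x - f y) = |x - y|

open Function Set

def IsMaxAbs {ι E : Type*} [AddCommGroup E] (ℓ : ι → E →+ ℝ) (N : E → ℝ) : Prop :=
  ∀ x, IsGreatest (range fun k => |ℓ k x|) (N x)

namespace IsMaxAbs

variable {ι E : Type*} [AddCommGroup E] {ℓ : ι → E →+ ℝ} {N : E → ℝ}

theorem abs_apply_le (hN : IsMaxAbs ℓ N) (x : E) (k : ι) : |ℓ k x| ≤ N x :=
  (hN x).2 ⟨k, rfl⟩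

theorem nonneg (hN : IsMaxAbs ℓ N) (x : E) : 0 ≤ N x := by
  obtain ⟨k, hk⟩ := (hN x).1
  exact hk ▸ abs_nonneg _

theorem map_zero (hN : IsMaxAbs ℓ N) : N 0 = 0 := by
  obtain ⟨k, hk⟩ := (hN 0).1
  simpa using hk.symm

theorem map_neg (hN : IsMaxAbs ℓ N) (x : E) : N (-x) = N x :=
  (hN (-x)).unique (by simpa only [AddMonoidHom.map_neg, abs_neg] using hN x)

theorem map_sub_comm (hN : IsMaxAbs ℓ N) (x y : E) : N (x - y) = N (y - x) := by
  rw [← neg_sub, hN.map_neg]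

theorem add_le (hN : IsMaxAbs ℓ N) (x y : E) : N (x + y) ≤ N x + N y := by
  obtain ⟨k, hk⟩ := (hN (x + y)).1
  rw [← hk]
  dsimp only
  rw [map_add]
  exact (abs_add_le _ _).trans (add_le_add (hN.abs_apply_le x k) (hN.abs_apply_le y k))

theorem add_eq_of_eq_apply (hN : IsMaxAbs ℓ N) {x y : E} {k : ι}
    (hx : N x = ℓ k x) (hy : N y = ℓ k y) : N (x + y) = N x + N y := by
  refine le_antisymm (hN.add_le x y) ?_
  calc N x + N y = ℓ k (x + y) := by rw [map_add, hx, hy]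
    _ ≤ N (x + y) := (le_abs_self _).trans (hN.abs_apply_le _ k)

theorem apply_sub_eq_abs {α : Type*} [LinearOrder α] (hN : IsMaxAbs ℓ N) {g : α → E}
    {s : α → ℝ} (hgs : ∀ i j, i < j → N (g i - g j) = s j - s i) (i j : α) :
    N (g i - g j) = |s i - s j| := by
  rcases lt_trichotomy i j with hij | rfl | hij
  · rw [hgs i j hij, abs_sub_comm, abs_of_nonneg (hgs i j hij ▸ hN.nonneg _)]
  · simp [hN.map_zero]
  · rw [hN.map_sub_comm, hgs j i hij, abs_of_nonneg (hgs j i hij ▸ hN.nonneg _)]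

end IsMaxAbs

def dot2AddHom (w : Fin 2 → ℝ) : (Fin 2 → ℝ) →+ ℝ :=
  AddMonoidHom.mk' (fun x => dot2 x w) fun x y => by simp only [dot2, Pi.add_apply]; ring

theorem isometricCopyOfReals_range {ι : Type*} {N : (Fin 2 → ℝ) → ℝ} {s : ι → ℝ}
    {g : ι → Fin 2 → ℝ} (hs : Injective s) (hgs : ∀ i j, N (g i - g j) = |s i - s j|) :
    IsometricCopyOfReals N (range s) (range g) := by
  refine ⟨extend s g 0, ⟨?_, ?_, ?_⟩, ?_⟩
  · rintro _ ⟨i, rfl⟩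
    exact ⟨i, (hs.extend_apply g 0 i).symm⟩
  · rintro _ ⟨i, rfl⟩ _ ⟨j, rfl⟩ hij
    rw [hs.extend_apply, hs.extend_apply] at hij
    have h := hgs i j
    rwa [hij, hgs j j, sub_self, abs_zero, eq_comm, abs_eq_zero, sub_eq_zero] at h
  · rintro _ ⟨i, rfl⟩
    exact ⟨s i, mem_range_self i, hs.extend_apply g 0 i⟩
  · rintro _ ⟨i, rfl⟩ _ ⟨j, rfl⟩
    rw [hs.extend_apply, hs.extend_apply, hgs]

theorem geomProg_eq_range (q : ℝ) : geomProg q = range fun i : ℕ => (1 - q ^ i) / (1 - q) := by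
  ext x
  constructor
  · rintro (rfl | ⟨i, -, rfl⟩)
    exacts [⟨0, by simp⟩, ⟨i, rfl⟩]
  · rintro ⟨_ | i, rfl⟩
    exacts [Or.inl (by simp), Or.inr ⟨i + 1, i.succ_pos, rfl⟩]

theorem injective_one_sub_pow_div {q : ℝ} (hq0 : 0 < q) (hq1 : q ≠ 1) :
    Injective fun i : ℕ => (1 - q ^ i) / (1 - q) := fun i j hij =>
  pow_right_injective₀ hq0 hq1 <| by
    simpa using (div_left_inj' (sub_ne_zero.2 hq1.symm)).1 hij

theorem range_update_zero {α : Type*} (z : ℕ → α) (p : α) :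
    range (update z 0 p) = {p} ∪ {w | ∃ i : ℕ, 1 ≤ i ∧ w = z i} := by
  ext w
  constructor
  · rintro ⟨_ | i, rfl⟩
    exacts [Or.inl (by simp), Or.inr ⟨i + 1, i.succ_pos, by simp⟩]
  · rintro (rfl | ⟨i, hi, rfl⟩)
    exacts [⟨0, by simp⟩, ⟨i, by simp [Nat.one_le_iff_ne_zero.1 hi]⟩]

theorem extend_geometric_copy_general (m : ℕ)
    (v : Fin m → (Fin 2 → ℝ))
    (N : (Fin 2 → ℝ) → ℝ)
    (hNmax : ∀ x, IsGreatest (Set.range fun k' => |dot2 x (v k')|) (N x))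
    (q : ℝ) (hq0 : 0 < q) (hq1 : q < 1)
    (z : ℕ → (Fin 2 → ℝ))
    (hz : ∀ i j : ℕ, 1 ≤ i → i < j → N (z i - z j) = (q ^ i - q ^ j) / (1 - q))
    (k : Fin m)
    (hk : ∀ i j : ℕ, 1 ≤ i → i < j → N (z i - z j) = dot2 (z i - z j) (v k))
    (u' : Fin 2 → ℝ) (hu'1 : N u' = 1) (hu'2 : dot2 u' (v k) = 1) :
    (∀ i : ℕ, 1 ≤ i → N ((z 1 + u') - z i) = (1 - q ^ i) / (1 - q)) ∧
      IsometricCopyOfReals N (geomProg q)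
        ({z 1 + u'} ∪ {w | ∃ i : ℕ, 1 ≤ i ∧ w = z i}) := by
  have hN : IsMaxAbs (fun k' => dot2AddHom (v k')) N := hNmax
  have hq : 1 - q ≠ 0 := by linarith
  have hfirst : ∀ i : ℕ, 1 ≤ i → N ((z 1 + u') - z i) = (1 - q ^ i) / (1 - q) := by
    intro i hi
    obtain rfl | hi := hi.eq_or_lt
    · rw [add_sub_cancel_left, hu'1, pow_one, div_self hq]
    · rw [add_sub_right_comm, add_comm, hN.add_eq_of_eq_apply (hu'1.trans hu'2.symm)
        (hk 1 i le_rfl hi), hz 1 i le_rfl hi, hu'1]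
      field_simp
      ring
  refine ⟨hfirst, ?_⟩
  rw [geomProg_eq_range, ← range_update_zero]
  refine isometricCopyOfReals_range (injective_one_sub_pow_div hq0 hq1.ne)
    (hN.apply_sub_eq_abs fun i j hij => ?_)
  obtain _ | i := i
  · simpa [hij.ne'] using hfirst j hij
  · rw [update_of_ne i.succ_ne_zero, update_of_ne (i.succ_pos.trans hij).ne',
      hz _ _ i.succ_pos hij]
    field_simp
    ring

/-- Extension lemma: if the copy `z¹, z², …` of G(q)∖{0} has direction `vᵏ`, then adding
any point `z⁰ = z¹ + u'` with `‖u'‖_N = 1` and `⟨u', vᵏ⟩ = 1` yields an `N`-isometric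
copy of G(q). -/
theorem extend_geometric_copy (m : ℕ) (hm : 0 < m)
    (v : Fin m → (Fin 2 → ℝ)) (hv : ∀ k', v k' ≠ 0)
    (N : (Fin 2 → ℝ) → ℝ)
    (hNmax : ∀ x, IsGreatest (Set.range fun k' => |dot2 x (v k')|) (N x))
    (hNnorm : ∀ x, N x = 0 → x = 0)
    (q : ℝ) (hq0 : 0 < q) (hq1 : q < 1)
    (z : ℕ → (Fin 2 → ℝ))
    (hz : ∀ i j : ℕ, 1 ≤ i → i < j → N (z i - z j) = (q ^ i - q ^ j) / (1 - q))
    (k : Fin m)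
    (hk : ∀ i j : ℕ, 1 ≤ i → i < j → N (z i - z j) = dot2 (z i - z j) (v k))
    (u' : Fin 2 → ℝ) (hu'1 : N u' = 1) (hu'2 : dot2 u' (v k) = 1) :
    (∀ i : ℕ, 1 ≤ i → N ((z 1 + u') - z i) = (1 - q ^ i) / (1 - q)) ∧
      IsometricCopyOfReals N (geomProg q)
        ({z 1 + u'} ∪ {w | ∃ i : ℕ, 1 ≤ i ∧ w = z i}) :=
  extend_geometric_copy_general m v N hNmax q hq0 hq1 z hz k hk u' hu'1 hu'2
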